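/- Counting identity for double occurrences: let A, B be words of length ℓ with Cor(A,A) = Cor(B,B). For every i ≥ 0, the number of words of the form A·X·A (|X| = i) whose pattern with respect to (A,B) is exactly (A, A) with gap lengths (0, i, 0) equals the number of words of the form B·X'·B (|X'| = i) whose pattern is exactly (B, B) with gap lengths (0, i, 0). In the notation of the paper: L^{(A,A)}(0,i,0) = L^{(B,B)}(0,i,0). -/

import Mathlib

/-- Number of (possibly overlapping) occurrences of `A` as a contiguous
substring of `X`, counted via start positions. -/
def countOcc (A X : List Bool) : ℕ :=
  ((Finset.range (X.length + 1)).filter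
    (fun i => i + A.length ≤ X.length ∧ (X.drop i).take A.length = A)).card

/-- Correlation set `Cor(A,B)`: those `1 ≤ k ≤ ℓ-1` such that the length-`k`
suffix of `A` equals the length-`k` prefix of `B`. -/
def corSet (A B : List Bool) : Finset ℕ :=
  (Finset.Icc 1 (A.length - 1)).filter (fun k => A.drop (A.length - k) = B.take k)

/-- Correlation number `[A,B] = Σ_{k ∈ Cor(A,B)} 2^k`. -/
def corNum (A B : List Bool) : ℕ := ∑ k ∈ corSet A B, 2 ^ k

/-- The swap: `bar A B A = B`, `bar A B B = A` (when `C ∈ {A,B}`). -/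
def bar (A B C : List Bool) : List Bool := if C = A then B else A

/-- The word `C₁ ^{m₁} C₂ ^{m₂} ⋯ ^{m_{k-1}} C_k`. -/
def chainWord : List (List Bool) → List ℕ → List Bool
  | [], _ => []
  | [C], _ => C
  | C :: C' :: Cs, m :: ms => C ++ (chainWord (C' :: Cs) ms).drop m
  | C :: _ :: _, [] => C

/-- Validity of the chain data: each `mᵢ ∈ Cor(Cᵢ, Cᵢ₊₁)`. -/
def chainValid (Cs : List (List Bool)) (ms : List ℕ) : Prop :=
  ∀ i, i < ms.length → ms.getD i 0 ∈ corSet (Cs.getD i []) (Cs.getD (i + 1) [])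

/-- `Y` is an overlap of `A` and `B`, i.e. `Y = C₁ ^{m₁} ⋯ ^{m_{k-1}} C_k`
with all `Cᵢ ∈ {A,B}` and `mᵢ ∈ Cor(Cᵢ,Cᵢ₊₁)`. -/
def isOverlap (A B Y : List Bool) : Prop :=
  ∃ Cs ms, Cs ≠ [] ∧ Cs.length = ms.length + 1 ∧ (∀ C ∈ Cs, C = A ∨ C = B) ∧
    chainValid Cs ms ∧ Y = chainWord Cs ms

/-- `Y'` is obtained from the overlap `Y = C₁ ^{m₁} ⋯ ^{m_{k-1}} C_k` by the
swap map: `Y' = C̄_k ^{m_{k-1}} ⋯ ^{m₁} C̄₁` (for some decomposition of `Y`). -/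
def overlapFlip (A B Y Y' : List Bool) : Prop :=
  ∃ Cs ms, Cs ≠ [] ∧ Cs.length = ms.length + 1 ∧ (∀ C ∈ Cs, C = A ∨ C = B) ∧
    chainValid Cs ms ∧ Y = chainWord Cs ms ∧
    Y' = chainWord ((Cs.map (bar A B)).reverse) ms.reverse

/-- `interleave [X₀,…,X_k] [E₁,…,E_k] = X₀ E₁ X₁ ⋯ E_k X_k`. -/
def interleave : List (List Bool) → List (List Bool) → List Bool
  | [], _ => []
  | X :: _, [] => X
  | X :: Xs, E :: Es => X ++ E ++ interleave Xs Es

/-- `Y = X₀ E₁ X₁ ⋯ E_k X_k` is a decomposition of `Y` with respect to `(A,B)`: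
the `Eᵢ` are overlaps of `A` and `B` capturing all occurrences of `A` and `B`
in `Y`, and the gaps `Xᵢ` contain no occurrence of `A` or `B`. -/
def isDecomp (A B Y : List Bool) (Xs Es : List (List Bool)) : Prop :=
  Xs.length = Es.length + 1 ∧ Y = interleave Xs Es ∧
  (∀ E ∈ Es, isOverlap A B E) ∧
  (∀ X ∈ Xs, countOcc A X = 0 ∧ countOcc B X = 0) ∧
  countOcc A Y = (Es.map (countOcc A)).sum ∧
  countOcc B Y = (Es.map (countOcc B)).sum

/-- `L^M(I)`: the number of words `Y` with pattern `M = (E₁,…,E_k)` and gap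
lengths `I = (i₀,…,i_k)`. -/
noncomputable def patCount (A B : List Bool) (M : List (List Bool)) (I : List ℕ) : ℕ :=
  {Y : List Bool | ∃ Xs, isDecomp A B Y Xs M ∧ Xs.map List.length = I}.ncard

/-- `M'` is the image of the pattern `M = (E₁,…,E_k)` under
`φ(E₁,…,E_k) = (φ(E_k),…,φ(E₁))`. -/
def patternFlip (A B : List Bool) (M M' : List (List Bool)) : Prop :=
  M'.length = M.length ∧
  ∀ j, j < M.length → overlapFlip A B (M.reverse.getD j []) (M'.getD j [])

namespace DPC

def occAt (P W : List Bool) (p : ℕ) : Prop :=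
  p + P.length ≤ W.length ∧ (W.drop p).take P.length = P

instance (P W : List Bool) (p : ℕ) : Decidable (occAt P W p) :=
  inferInstanceAs (Decidable (_ ∧ _))

lemma countOcc_eq_card_filter (A X : List Bool) :
    countOcc A X = ((Finset.range (X.length + 1)).filter (occAt A X)).card := rfl

lemma countOcc_eq_zero_iff {A X : List Bool} :
    countOcc A X = 0 ↔ ∀ p, ¬ occAt A X p := by
  rw [countOcc_eq_card_filter, Finset.card_eq_zero, Finset.filter_eq_empty_iff]
  constructor
  · intro h p hp
    exact h (Finset.mem_range.2 (by have := hp.1; omega)) hp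
  · intro h p _ hp
    exact h p hp

lemma occAt_zero_iff {A X : List Bool} (h : A.length ≤ X.length) :
    occAt A X 0 ↔ X.take A.length = A := by
  simp [occAt, h]

/-- a word occurs in itself exactly once -/
lemma countOcc_self {A : List Bool} (hA : A ≠ []) : countOcc A A = 1 := by
  rw [countOcc_eq_card_filter]
  have : (Finset.range (A.length + 1)).filter (occAt A A) = {0} := by
    ext p
    simp only [Finset.mem_filter, Finset.mem_range, Finset.mem_singleton]
    constructor
    · rintro ⟨-, hp, -⟩
      have : A.length ≠ 0 := by simpa using hA
      omega
    · rintro rfl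
      refine ⟨by omega, by simp [occAt]⟩
  rw [this]; rfl

lemma countOcc_of_ne {A C : List Bool} (hlen : A.length = C.length) (hne : A ≠ C) :
    countOcc A C = 0 := by
  rw [countOcc_eq_zero_iff]
  rintro p ⟨h1, h2⟩
  have hp : p = 0 := by omega
  subst hp
  simp only [List.drop_zero] at h2
  rw [hlen, List.take_length] at h2
  exact hne h2.symm

lemma countOcc_nil {A : List Bool} (hA : A ≠ []) : countOcc A [] = 0 := by
  rw [countOcc_eq_zero_iff]
  rintro p ⟨h1, -⟩
  have : A.length ≠ 0 := by simpa using hA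
  simp only [List.length_nil] at h1; omega


def wordsF (n : ℕ) : Finset (List Bool) :=
  (Finset.univ : Finset (Fin n → Bool)).image List.ofFn

lemma mem_wordsF {n : ℕ} {W : List Bool} : W ∈ wordsF n ↔ W.length = n := by
  constructor
  · rintro h
    simp only [wordsF, Finset.mem_image] at h
    obtain ⟨f, -, rfl⟩ := h
    simp
  · rintro rfl
    simp only [wordsF, Finset.mem_image]
    exact ⟨W.get, Finset.mem_univ _, List.ofFn_get W⟩

lemma card_wordsF (n : ℕ) : (wordsF n).card = 2 ^ n := by
  rw [wordsF, Finset.card_image_of_injective _ List.ofFn_injective, Finset.card_univ]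
  simp

def Kset (ℓ : ℕ) (D C : List Bool) (N : ℕ) : Finset (List Bool) :=
  (wordsF (N + ℓ)).filter (fun W => W.take ℓ = D ∧ W.drop N = C)

lemma mem_Kset {ℓ N : ℕ} {D C W : List Bool} :
    W ∈ Kset ℓ D C N ↔ W.length = N + ℓ ∧ W.take ℓ = D ∧ W.drop N = C := by
  simp [Kset, mem_wordsF, and_assoc]

lemma Kset_recon {ℓ N : ℕ} {D C W : List Bool} (hD : D.length = ℓ) (hN : ℓ ≤ N)
    (hW : W ∈ Kset ℓ D C N) : D ++ ((W.drop ℓ).take (N - ℓ)) ++ C = W := by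
  rw [mem_Kset] at hW
  obtain ⟨hlen, htake, hdrop⟩ := hW
  conv_rhs => rw [← List.take_append_drop ℓ W, ← List.take_append_drop (N - ℓ) (W.drop ℓ)]
  rw [htake, List.drop_drop, show ℓ + (N - ℓ) = N by omega, hdrop, List.append_assoc]

/-- big case : `K` counts are `2^(N-ℓ)` -/
lemma card_Kset_ge (ℓ N : ℕ) (D C : List Bool) (hD : D.length = ℓ) (hC : C.length = ℓ)
    (hN : ℓ ≤ N) : (Kset ℓ D C N).card = 2 ^ (N - ℓ) := by
  rw [← card_wordsF (N - ℓ)]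
  apply Finset.card_bij' (fun W _ => (W.drop ℓ).take (N - ℓ))
      (fun Z _ => D ++ Z ++ C)
  · intro W hW
    have h1 := (mem_Kset.1 hW).1
    rw [mem_wordsF, List.length_take, List.length_drop, h1]
    omega
  · intro Z hZ
    rw [mem_wordsF] at hZ
    rw [mem_Kset]
    refine ⟨by simp [hD, hC, hZ]; omega, ?_, ?_⟩
    · rw [List.append_assoc, List.take_left' hD]
    · rw [List.append_assoc, List.drop_append,
        List.drop_append, hD, hZ,
        List.drop_eq_nil_of_le (by omega : D.length ≤ N),
        List.drop_eq_nil_of_le (by omega : Z.length ≤ N - ℓ)]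
      simp only [List.nil_append]
      rw [show N - ℓ - (N - ℓ) = 0 by omega]
      rfl
  · intro W hW
    exact Kset_recon hD hN hW
  · intro Z hZ
    rw [mem_wordsF] at hZ
    rw [List.append_assoc, List.drop_left' hD, List.take_left' hZ]

/-- small case: `K` counts are correlation indicators -/
lemma card_Kset_lt (ℓ N : ℕ) (D C : List Bool) (hD : D.length = ℓ) (hC : C.length = ℓ)
    (hN1 : 1 ≤ N) (hN : N < ℓ) :
    (Kset ℓ D C N).card = if ℓ - N ∈ corSet D C then 1 else 0 := by
  have key : ∀ W, W ∈ Kset ℓ D C N ↔ (W = D.take N ++ C ∧ ℓ - N ∈ corSet D C) := by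
    intro W
    rw [mem_Kset]
    constructor
    · rintro ⟨hlen, htake, hdrop⟩
      have hWD : W.take N = D.take N := by
        rw [← htake, List.take_take, min_eq_left (by omega)]
      constructor
      · rw [← hWD, ← hdrop, List.take_append_drop]
      · rw [corSet, Finset.mem_filter, Finset.mem_Icc]
        refine ⟨⟨by omega, by omega⟩, ?_⟩
        have h2 : D.drop N = (W.take ℓ).drop N := by rw [htake]
        rw [hD, show ℓ - (ℓ - N) = N by omega, h2, List.drop_take, ← hdrop]
    · rintro ⟨rfl, hcor⟩
      rw [corSet, Finset.mem_filter, Finset.mem_Icc, hD,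
        show ℓ - (ℓ - N) = N by omega] at hcor
      have hlenDN : (D.take N).length = N := by
        rw [List.length_take, hD]; omega
      refine ⟨by simp [hC, hlenDN], ?_, by rw [List.drop_left' hlenDN]⟩
      rw [List.take_append, hlenDN, List.take_take,
        min_eq_right (by omega), ← hcor.2]
      exact List.take_append_drop N D
  by_cases hc : ℓ - N ∈ corSet D C
  · rw [if_pos hc]
    have : Kset ℓ D C N = {D.take N ++ C} := by
      ext W; rw [key W, Finset.mem_singleton]
      exact ⟨fun h => h.1, fun h => ⟨h, hc⟩⟩
    rw [this]; rfl
  · rw [if_neg hc]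
    rw [Finset.card_eq_zero, Finset.eq_empty_iff_forall_notMem]
    intro W hW
    exact hc ((key W).1 hW).2


def noMid (A B W : List Bool) (N : ℕ) : Prop :=
  ∀ p, p < N → 0 < p → ¬ occAt A W p ∧ ¬ occAt B W p

instance (A B W : List Bool) (N : ℕ) : Decidable (noMid A B W N) :=
  inferInstanceAs (Decidable (∀ p, p < N → _))

def Hset (A B : List Bool) (ℓ : ℕ) (D C : List Bool) (N : ℕ) : Finset (List Bool) :=
  (Kset ℓ D C N).filter (fun W => noMid A B W N)

lemma mem_Hset {A B : List Bool} {ℓ N : ℕ} {D C W : List Bool} :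
    W ∈ Hset A B ℓ D C N ↔ W ∈ Kset ℓ D C N ∧ noMid A B W N := by
  simp only [Hset, Finset.mem_filter]

lemma occAt_take_iff {E W : List Bool} {p m : ℕ} (h : p + E.length ≤ m) :
    occAt E (W.take m) p ↔ occAt E W p := by
  have h1 : (W.take m).length = min m W.length := List.length_take
  have h2 : ((W.take m).drop p).take E.length = (W.drop p).take E.length := by
    rw [List.drop_take, List.take_take, min_eq_left (by omega)]
  unfold occAt
  rw [h2, h1]
  constructor
  · rintro ⟨h3, h4⟩; exact ⟨by omega, h4⟩
  · rintro ⟨h3, h4⟩; exact ⟨by omega, h4⟩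

def Tset (A B : List Bool) (ℓ : ℕ) (D C : List Bool) (N : ℕ) (E : List Bool) (q : ℕ) :
    Finset (List Bool) :=
  (Kset ℓ D C N).filter
    (fun W => occAt E W q ∧ ∀ p, p < q → 0 < p → ¬ occAt A W p ∧ ¬ occAt B W p)

lemma card_Tset {A B : List Bool} {ℓ : ℕ} (hA : A.length = ℓ) (hB : B.length = ℓ)
    {D C : List Bool} (hD : D.length = ℓ) (hC : C.length = ℓ) {N : ℕ} {E : List Bool}
    (hE : E.length = ℓ) {q : ℕ} (hq0 : 0 < q) (hqN : q < N) :
    (Tset A B ℓ D C N E q).card = (Hset A B ℓ D E q).card * (Kset ℓ E C (N - q)).card := by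
  rw [← Finset.card_product]
  refine Finset.card_bij' (fun W _ => (W.take (q + ℓ), W.drop q))
    (fun PS _ => PS.1 ++ PS.2.drop ℓ) ?hi ?hj ?left ?right
  case hi =>
    rintro W hW
    simp only [Tset, Finset.mem_filter, mem_Kset] at hW
    obtain ⟨⟨hlen, htake, hdrop⟩, ⟨hocc1, hocc2⟩, hmin⟩ := hW
    rw [Finset.mem_product, mem_Hset, mem_Kset, mem_Kset]
    refine ⟨⟨⟨?_, ?_, ?_⟩, ?_⟩, ?_, ?_, ?_⟩
    · rw [List.length_take, hlen]; omega
    · rw [List.take_take, min_eq_left (by omega)]; exact htake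
    · rw [List.drop_take, show q + ℓ - q = ℓ by omega, ← hE]; exact hocc2
    · intro p hpq hp0
      have hm := hmin p (by omega) hp0
      exact ⟨fun hc => hm.1 ((occAt_take_iff (by rw [hA]; omega)).1 hc),
             fun hc => hm.2 ((occAt_take_iff (by rw [hB]; omega)).1 hc)⟩
    · rw [List.length_drop, hlen]; omega
    · show (W.drop q).take ℓ = E
      rw [← hE]; exact hocc2
    · rw [List.drop_drop, show q + (N - q) = N by omega]; exact hdrop
  case hj =>
    rintro ⟨P, S⟩ hPS
    rw [Finset.mem_product, mem_Hset, mem_Kset, mem_Kset] at hPS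
    obtain ⟨⟨⟨hPlen, hPtake, hPdrop⟩, hPmid⟩, hSlen, hStake, hSdrop⟩ := hPS
    simp only at hPlen hPtake hPdrop hPmid hSlen hStake hSdrop
    have hSdl : (S.drop ℓ).length = N - q := by rw [List.length_drop, hSlen]; omega
    have weq : P ++ S.drop ℓ = P.take q ++ S := by
      conv_lhs => rw [← List.take_append_drop q P]
      rw [hPdrop, ← hStake, List.append_assoc, List.take_append_drop]
    have hPq : (P.take q).length = q := by rw [List.length_take, hPlen]; omega
    have hlenW : (P ++ S.drop ℓ).length = N + ℓ := by
      rw [List.length_append, hPlen, hSdl]; omega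
    have htakeW : (P ++ S.drop ℓ).take (q + ℓ) = P := List.take_left' hPlen
    have hdropq : (P ++ S.drop ℓ).drop q = S := by
      rw [weq, List.drop_left' hPq]
    simp only [Tset, Finset.mem_filter, mem_Kset]
    refine ⟨⟨hlenW, ?_, ?_⟩, ⟨?_, ?_⟩, ?_⟩
    · rw [List.take_append, hPlen, show ℓ - (q + ℓ) = 0 by omega,
        List.take_zero, List.append_nil]
      exact hPtake
    · rw [weq, List.drop_append, hPq,
        List.drop_eq_nil_of_le (by rw [hPq]; omega), List.nil_append]
      exact hSdrop
    · rw [hlenW, hE]; omega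
    · rw [hdropq, hE]; exact hStake
    · intro p hpq hp0
      have key : ∀ X : List Bool, X.length = ℓ → occAt X (P ++ S.drop ℓ) p → occAt X P p := by
        intro X hX hc
        have h5 : occAt X ((P ++ S.drop ℓ).take (q + ℓ)) p := by
          rw [occAt_take_iff (by omega)]; exact hc
        rwa [htakeW] at h5
      have hm := hPmid p hpq hp0
      exact ⟨fun hc => hm.1 (key A hA hc), fun hc => hm.2 (key B hB hc)⟩
  case left =>
    intro W hW
    simp only
    rw [List.drop_drop, List.take_append_drop]
  case right =>
    rintro ⟨P, S⟩ hPS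
    rw [Finset.mem_product, mem_Hset, mem_Kset, mem_Kset] at hPS
    obtain ⟨⟨⟨hPlen, hPtake, hPdrop⟩, hPmid⟩, hSlen, hStake, hSdrop⟩ := hPS
    simp only at hPlen hPtake hPdrop hSlen hStake hSdrop
    have weq : P ++ S.drop ℓ = P.take q ++ S := by
      conv_lhs => rw [← List.take_append_drop q P]
      rw [hPdrop, ← hStake, List.append_assoc, List.take_append_drop]
    have hPq : (P.take q).length = q := by rw [List.length_take, hPlen]; omega
    have h1 : (P ++ S.drop ℓ).take (q + ℓ) = P := List.take_left' hPlen
    have h2 : (P ++ S.drop ℓ).drop q = S := by rw [weq, List.drop_left' hPq]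
    simp only [h1, h2]



lemma occAt_unique {A B W : List Bool} (hlen : A.length = B.length) {q : ℕ}
    (h1 : occAt A W q) (h2 : occAt B W q) : A = B := by
  rw [← h1.2, ← h2.2, hlen]

/-- the master splitting identity -/
lemma card_split {A B : List Bool} {ℓ : ℕ} (hA : A.length = ℓ) (hB : B.length = ℓ)
    (hAB : A ≠ B) {D C : List Bool} (hD : D.length = ℓ) (hC : C.length = ℓ) (N : ℕ) :
    (Kset ℓ D C N).card = (Hset A B ℓ D C N).card +
      ∑ q ∈ Finset.Ioo 0 N,
        ((Hset A B ℓ D A q).card * (Kset ℓ A C (N - q)).card +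
         (Hset A B ℓ D B q).card * (Kset ℓ B C (N - q)).card) := by
  classical
  have hpart := Finset.card_filter_add_card_filter_not
    (s := Kset ℓ D C N) (p := fun W => noMid A B W N)
  rw [← hpart]
  congr 1
  have hbad : (Kset ℓ D C N).filter (fun W => ¬ noMid A B W N) =
      (Finset.Ioo 0 N).biUnion (fun q => Tset A B ℓ D C N A q ∪ Tset A B ℓ D C N B q) := by
    ext W
    simp only [Finset.mem_filter, Finset.mem_biUnion, Finset.mem_Ioo, Finset.mem_union]
    constructor
    · rintro ⟨hK, hbadW⟩
      have hex : ∃ p, 0 < p ∧ p < N ∧ (occAt A W p ∨ occAt B W p) := by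
        by_contra hno
        push_neg at hno
        exact hbadW (fun p hpN hp0 => hno p hp0 hpN)
      obtain ⟨hq0, hqN, hocc⟩ := Nat.find_spec hex
      have hmin : ∀ p, p < Nat.find hex → 0 < p →
          ¬ occAt A W p ∧ ¬ occAt B W p := by
        intro p hp hp0
        have := Nat.find_min hex hp
        push_neg at this
        exact this hp0 (by omega)
      refine ⟨Nat.find hex, ⟨hq0, hqN⟩, ?_⟩
      rcases hocc with h | h
      · exact Or.inl (by simp only [Tset, Finset.mem_filter]; exact ⟨hK, h, hmin⟩)
      · exact Or.inr (by simp only [Tset, Finset.mem_filter]; exact ⟨hK, h, hmin⟩)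
    · rintro ⟨q, ⟨hq0, hqN⟩, hT⟩
      rcases hT with hT | hT <;>
      · simp only [Tset, Finset.mem_filter] at hT
        refine ⟨hT.1, fun hnm => ?_⟩
        have := hnm q hqN hq0
        tauto
  have hdisj : ∀ q ∈ Finset.Ioo 0 N, ∀ q' ∈ Finset.Ioo 0 N, q ≠ q' →
      Disjoint (Tset A B ℓ D C N A q ∪ Tset A B ℓ D C N B q)
               (Tset A B ℓ D C N A q' ∪ Tset A B ℓ D C N B q') := by
    intro q hq q' hq' hne
    rw [Finset.mem_Ioo] at hq hq'
    rw [Finset.disjoint_left]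
    intro W h1 h2
    wlog hlt : q < q' generalizing q q'
    · exact this q' hq' q hq hne.symm h2 h1 (by omega)
    have hocc : occAt A W q ∨ occAt B W q := by
      simp only [Tset, Finset.mem_filter, Finset.mem_union] at h1
      rcases h1 with h | h
      · exact Or.inl h.2.1
      · exact Or.inr h.2.1
    have hmin : ¬ occAt A W q ∧ ¬ occAt B W q := by
      simp only [Tset, Finset.mem_filter, Finset.mem_union] at h2
      rcases h2 with h | h
      · exact h.2.2 q hlt hq.1
      · exact h.2.2 q hlt hq.1
    tauto
  rw [hbad, Finset.card_biUnion hdisj]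
  apply Finset.sum_congr rfl
  intro q hq
  rw [Finset.mem_Ioo] at hq
  rw [Finset.card_union_of_disjoint, card_Tset hA hB hD hC hA hq.1 hq.2,
    card_Tset hA hB hD hC hB hq.1 hq.2]
  rw [Finset.disjoint_left]
  intro W h1 h2
  simp only [Tset, Finset.mem_filter] at h1 h2
  exact hAB (occAt_unique (by rw [hA, hB]) h1.2.1 h2.2.1)


lemma coeff_mul_mk0 (f g : ℕ → ℤ) (hf : f 0 = 0) (hg : g 0 = 0) (N : ℕ) :
    PowerSeries.coeff N (PowerSeries.mk f * PowerSeries.mk g) =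
      ∑ q ∈ Finset.Ioo 0 N, f q * g (N - q) := by
  rw [PowerSeries.coeff_mul, Finset.Nat.sum_antidiagonal_eq_sum_range_succ_mk]
  simp only [PowerSeries.coeff_mk]
  symm
  apply Finset.sum_subset
  · intro q hq
    rw [Finset.mem_Ioo] at hq
    rw [Finset.mem_range]
    omega
  · intro q hq hq'
    rw [Finset.mem_range] at hq
    rw [Finset.mem_Ioo] at hq'
    push_neg at hq'
    rcases Nat.eq_zero_or_pos q with h | h
    · subst h; rw [hf, zero_mul]
    · have hqN : q = N := by omega
      subst hqN
      rw [Nat.sub_self, hg, mul_zero]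

/-- abstract 2x2 renewal-system cancellation -/
lemma matrix_cancel {R : Type*} [CommRing R] [IsDomain R]
    (hAA hAB hBA hBB kAA kAB kBA kBB : R)
    (relAA : kAA = hAA + hAA * kAA + hAB * kBA)
    (relAB : kAB = hAB + hAA * kAB + hAB * kBB)
    (relBA : kBA = hBA + hBA * kAA + hBB * kBA)
    (relBB : kBB = hBB + hBA * kAB + hBB * kBB)
    (hk : kAA = kBB)
    (hdet : (1 + kAA) * (1 + kBB) - kAB * kBA ≠ 0) :
    hAA = hBB := by
  set detQ := (1 + kAA) * (1 + kBB) - kAB * kBA with hdetQ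
  have e1 : (1 - hAA) * detQ = 1 + kBB := by
    linear_combination (1 + kBB) * relAA - kBA * relAB
  have e2 : (1 - hBB) * detQ = 1 + kAA := by
    linear_combination (1 + kAA) * relBB - kAB * relBA
  have e3 : (1 - hAA) * detQ = (1 - hBB) * detQ := by
    rw [e1, e2, hk]
  have e4 : (1 - hAA : R) = 1 - hBB := mul_right_cancel₀ hdet e3
  linear_combination -e4



noncomputable def seqH (A B : List Bool) (ℓ : ℕ) (D C : List Bool) : PowerSeries ℤ :=
  PowerSeries.mk fun N => if N = 0 then 0 else ((Hset A B ℓ D C N).card : ℤ)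

noncomputable def seqK (ℓ : ℕ) (D C : List Bool) : PowerSeries ℤ :=
  PowerSeries.mk fun N => if N = 0 then 0 else ((Kset ℓ D C N).card : ℤ)

lemma seq_rel {A B : List Bool} {ℓ : ℕ} (hA : A.length = ℓ) (hB : B.length = ℓ)
    (hAB : A ≠ B) {D C : List Bool} (hD : D.length = ℓ) (hC : C.length = ℓ) :
    seqK ℓ D C = seqH A B ℓ D C + seqH A B ℓ D A * seqK ℓ A C
      + seqH A B ℓ D B * seqK ℓ B C := by
  apply PowerSeries.ext
  intro N
  rw [map_add, map_add]
  unfold seqH seqK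
  rw [coeff_mul_mk0 _ _ (by simp) (by simp), coeff_mul_mk0 _ _ (by simp) (by simp),
    PowerSeries.coeff_mk, PowerSeries.coeff_mk]
  rcases Nat.eq_zero_or_pos N with h | h
  · subst h; simp
  rw [if_neg (by omega), if_neg (by omega)]
  have hsum : ∀ (E : List Bool) (hE : E.length = ℓ),
      (∑ q ∈ Finset.Ioo 0 N, (if q = 0 then 0 else ((Hset A B ℓ D E q).card : ℤ)) *
        (if N - q = 0 then 0 else ((Kset ℓ E C (N - q)).card : ℤ)))
      = ∑ q ∈ Finset.Ioo 0 N, ((Hset A B ℓ D E q).card : ℤ) * ((Kset ℓ E C (N - q)).card : ℤ) := by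
    intro E hE
    apply Finset.sum_congr rfl
    intro q hq
    rw [Finset.mem_Ioo] at hq
    rw [if_neg (by omega), if_neg (by omega)]
  rw [hsum A hA, hsum B hB]
  have := card_split hA hB hAB hD hC N
  push_cast [this]
  rw [Finset.sum_add_distrib]
  push_cast
  ring

lemma seqK_symm {A B : List Bool} {ℓ : ℕ} (hA : A.length = ℓ) (hB : B.length = ℓ)
    (hl : 1 ≤ ℓ) (hcor : corSet A A = corSet B B) :
    seqK ℓ A A = seqK ℓ B B := by
  apply PowerSeries.ext
  intro N
  unfold seqK
  rw [PowerSeries.coeff_mk, PowerSeries.coeff_mk]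
  rcases Nat.eq_zero_or_pos N with h | h
  · subst h; simp
  rw [if_neg (by omega), if_neg (by omega)]
  rcases lt_or_ge N ℓ with hN | hN
  · rw [card_Kset_lt ℓ N A A hA hA h hN, card_Kset_lt ℓ N B B hB hB h hN, hcor]
  · rw [card_Kset_ge ℓ N A A hA hA hN, card_Kset_ge ℓ N B B hB hB hN]

lemma seqK_det_ne {A B : List Bool} {ℓ : ℕ} :
    (1 + seqK ℓ A A) * (1 + seqK ℓ B B) - seqK ℓ A B * seqK ℓ B A ≠ 0 := by
  intro h
  have h0 := congrArg (PowerSeries.constantCoeff) h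
  simp only [map_sub, map_mul, map_add, map_one, map_zero] at h0
  have hc : ∀ D C, PowerSeries.constantCoeff (seqK ℓ D C) = 0 := by
    intro D C
    unfold seqK
    rw [← PowerSeries.coeff_zero_eq_constantCoeff, PowerSeries.coeff_mk]
    simp
  rw [hc, hc, hc, hc] at h0
  simp at h0

/-- MAIN COUNTING THEOREM: `H`-counts agree -/
theorem Hcard_eq {A B : List Bool} {ℓ : ℕ} (hA : A.length = ℓ) (hB : B.length = ℓ)
    (hAB : A ≠ B) (hl : 1 ≤ ℓ) (hcor : corSet A A = corSet B B) (N : ℕ) (hN : 1 ≤ N) :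
    (Hset A B ℓ A A N).card = (Hset A B ℓ B B N).card := by
  have key : seqH A B ℓ A A = seqH A B ℓ B B := by
    apply matrix_cancel (seqH A B ℓ A A) (seqH A B ℓ A B) (seqH A B ℓ B A) (seqH A B ℓ B B)
      (seqK ℓ A A) (seqK ℓ A B) (seqK ℓ B A) (seqK ℓ B B)
    · exact seq_rel hA hB hAB hA hA
    · exact seq_rel hA hB hAB hA hB
    · exact seq_rel hA hB hAB hB hA
    · exact seq_rel hA hB hAB hB hB
    · exact seqK_symm hA hB hl hcor
    · exact seqK_det_ne
  have hco := congrArg (PowerSeries.coeff N) key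
  unfold seqH at hco
  rw [PowerSeries.coeff_mk, PowerSeries.coeff_mk, if_neg (by omega), if_neg (by omega)] at hco
  exact_mod_cast hco

end DPC

namespace DPC

lemma card_le_countOcc {E Y : List Bool} (S : Finset ℕ) (h : ∀ p ∈ S, occAt E Y p) :
    S.card ≤ countOcc E Y := by
  rw [countOcc_eq_card_filter]
  apply Finset.card_le_card
  intro p hp
  rw [Finset.mem_filter, Finset.mem_range]
  have h2 := h p hp
  exact ⟨by have := h2.1; omega, h2⟩

/-- in the main case, membership in the pattern-count set is membership in `Hset` -/
lemma decomp_iff_Hset {A B C : List Bool} {ℓ i : ℕ} (hA : A.length = ℓ)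
    (hB : B.length = ℓ) (hl : 1 ≤ ℓ) (hAB : A ≠ B) (hC : C = A ∨ C = B) (W : List Bool) :
    (∃ Xs, isDecomp A B W Xs [C, C] ∧ Xs.map List.length = [0, i, 0]) ↔
      W ∈ Hset A B ℓ C C (ℓ + i) := by
  have hCl : C.length = ℓ := by rcases hC with rfl | rfl <;> assumption
  have hCne : C ≠ [] := by intro h; rw [h] at hCl; simp at hCl; omega
  have hAne : A ≠ [] := by intro h; rw [h] at hA; simp at hA; omega
  have hBne : B ≠ [] := by intro h; rw [h] at hB; simp at hB; omega
  constructor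
  · rintro ⟨Xs, ⟨hlen3, hY, hov, hgaps, hcA, hcB⟩, hmap⟩
    -- structure of Xs
    rcases Xs with _ | ⟨X0, Xs⟩; · simp at hmap
    rcases Xs with _ | ⟨X1, Xs⟩; · simp at hmap
    rcases Xs with _ | ⟨X2, Xs⟩; · simp at hmap
    rcases Xs with _ | ⟨X3, Xs⟩
    swap; · simp at hmap
    simp only [List.map_cons, List.map_nil, List.cons.injEq, and_true] at hmap
    obtain ⟨h0, h1, h2⟩ := hmap
    rw [List.length_eq_zero_iff] at h0 h2
    subst h0; subst h2
    have hYeq : W = (C ++ X1) ++ C := by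
      rw [hY]; simp [interleave]
    have hlenW : W.length = (ℓ + i) + ℓ := by
      rw [hYeq]; simp [hCl, h1]; omega
    have htakeW : W.take ℓ = C := by
      rw [hYeq, List.append_assoc]; exact List.take_left' hCl
    have hdropW : W.drop (ℓ + i) = C := by
      rw [hYeq]; exact List.drop_left' (by simp [hCl, h1])
    have hocc0 : occAt C W 0 := by
      refine ⟨by rw [hlenW, hCl]; omega, ?_⟩
      rw [List.drop_zero, hCl, htakeW]
    have hoccN : occAt C W (ℓ + i) := by
      refine ⟨by rw [hlenW, hCl], ?_⟩
      rw [hdropW, List.take_length]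
    -- the two occurrence counts
    have hc2 : countOcc C W = 2 := by
      rcases hC with rfl | rfl
      · rw [hcA]; simp [countOcc_self hAne]
      · rw [hcB]; simp [countOcc_self hBne]
    have hc0 : ∀ E : List Bool, E.length = ℓ → E ≠ C → (E = A ∨ E = B) →
        countOcc E W = 0 := by
      intro E hEl hEC hEAB
      have hEzero : countOcc E C = 0 := countOcc_of_ne (hEl.trans hCl.symm) hEC
      rcases hEAB with rfl | rfl
      · rw [hcA]; simp [hEzero]
      · rw [hcB]; simp [hEzero]
    rw [mem_Hset, mem_Kset]
    refine ⟨⟨hlenW, htakeW, hdropW⟩, ?_⟩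
    intro p hpN hp0
    have hkill : ∀ E : List Bool, E.length = ℓ → (E = A ∨ E = B) → ¬ occAt E W p := by
      intro E hEl hEAB hocc
      by_cases hEC : E = C
      · subst hEC
        have h3 : ({0, p, ℓ + i} : Finset ℕ).card ≤ countOcc E W := by
          apply card_le_countOcc
          intro q hq
          simp only [Finset.mem_insert, Finset.mem_singleton] at hq
          rcases hq with rfl | rfl | rfl
          · exact hocc0
          · exact hocc
          · exact hoccN
        rw [hc2] at h3
        rw [Finset.card_insert_of_notMem (by simp; omega),
          Finset.card_insert_of_notMem (by simp; omega), Finset.card_singleton] at h3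
        omega
      · have h3 : ({p} : Finset ℕ).card ≤ countOcc E W := by
          apply card_le_countOcc
          intro q hq
          simp only [Finset.mem_singleton] at hq
          subst hq; exact hocc
        rw [hc0 E hEl hEC hEAB] at h3
        simp at h3
    exact ⟨hkill A hA (Or.inl rfl), hkill B hB (Or.inr rfl)⟩
  · intro hW
    rw [mem_Hset, mem_Kset] at hW
    obtain ⟨⟨hlenW, htakeW, hdropW⟩, hmid⟩ := hW
    set X1 := (W.drop ℓ).take i with hX1
    have hX1len : X1.length = i := by
      rw [hX1, List.length_take, List.length_drop, hlenW]; omega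
    have hWdrop : W.drop ℓ = X1 ++ C := by
      rw [hX1, ← hdropW]
      have hdd : W.drop (ℓ + i) = (W.drop ℓ).drop i := by rw [List.drop_drop]
      rw [hdd]
      exact (List.take_append_drop i (W.drop ℓ)).symm
    have hWeq : W = (C ++ X1) ++ C := by
      conv_lhs => rw [← List.take_append_drop ℓ W]
      rw [htakeW, hWdrop, List.append_assoc]
    have hocc0 : occAt C W 0 := by
      refine ⟨by rw [hlenW, hCl]; omega, ?_⟩
      rw [List.drop_zero, hCl, htakeW]
    have hoccN : occAt C W (ℓ + i) := by
      refine ⟨by rw [hlenW, hCl], ?_⟩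
      rw [hdropW, List.take_length]
    -- counts
    have hc2 : countOcc C W = 2 := by
      rw [countOcc_eq_card_filter]
      have hfil : (Finset.range (W.length + 1)).filter (occAt C W) = {0, ℓ + i} := by
        ext p
        simp only [Finset.mem_filter, Finset.mem_range, Finset.mem_insert,
          Finset.mem_singleton]
        constructor
        · rintro ⟨hpr, hocc⟩
          by_contra hcon
          push_neg at hcon
          have hple : p + ℓ ≤ W.length := by have := hocc.1; rw [hCl] at this; omega
          have hplt : p < ℓ + i := by rw [hlenW] at hple; omega
          have hm := hmid p hplt (by omega)
          rcases hC with rfl | rfl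
          · exact hm.1 hocc
          · exact hm.2 hocc
        · rintro (rfl | rfl)
          · exact ⟨by omega, hocc0⟩
          · exact ⟨by rw [hlenW]; omega, hoccN⟩
      rw [hfil, Finset.card_insert_of_notMem (by simp; omega), Finset.card_singleton]
    have hc0 : ∀ E : List Bool, E.length = ℓ → E ≠ C → (E = A ∨ E = B) →
        countOcc E W = 0 := by
      intro E hEl hEC hEAB
      rw [countOcc_eq_zero_iff]
      intro p hocc
      have hple : p + ℓ ≤ W.length := by have := hocc.1; rw [hEl] at this; omega
      have hpleN : p ≤ ℓ + i := by rw [hlenW] at hple; omega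
      rcases Nat.eq_zero_or_pos p with rfl | hp0
      · apply hEC
        rw [← hocc.2, List.drop_zero, hEl, htakeW]
      rcases Nat.lt_or_ge p (ℓ + i) with hplt | hpge
      · have hm := hmid p hplt hp0
        rcases hEAB with rfl | rfl
        · exact hm.1 hocc
        · exact hm.2 hocc
      · have hpe : p = ℓ + i := by omega
        subst hpe
        apply hEC
        rw [← hocc.2, hdropW, hEl, ← hCl, List.take_length]
    -- occurrences inside the gap lift to W
    have hlift : ∀ E : List Bool, E.length = ℓ → ∀ p, occAt E X1 p → occAt E W (ℓ + p) := by
      intro E hEl p hocc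
      have hpl : p + ℓ ≤ i := by have := hocc.1; rw [hEl, hX1len] at this; omega
      refine ⟨by rw [hlenW, hEl]; omega, ?_⟩
      have hX1drop : X1.drop p = (W.drop (ℓ + p)).take (i - p) := by
        rw [hX1, List.drop_take, List.drop_drop]
      have h2 := hocc.2
      rw [hX1drop, List.take_take, min_eq_left (by rw [hEl]; omega)] at h2
      exact h2
    have hgapzero : countOcc A X1 = 0 ∧ countOcc B X1 = 0 := by
      constructor <;>
      · rw [countOcc_eq_zero_iff]
        intro p hocc
        first
        | exact (hmid (ℓ + p) (by have := hocc.1; rw [hA, hX1len] at this; omega)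
            (by omega) ).1 (hlift A hA p hocc)
        | exact (hmid (ℓ + p) (by have := hocc.1; rw [hB, hX1len] at this; omega)
            (by omega) ).2 (hlift B hB p hocc)
    refine ⟨[[], X1, []], ⟨rfl, ?_, ?_, ?_, ?_, ?_⟩, by simp [hX1len]⟩
    · simp [interleave, hWeq]
    · rintro E hE
      simp only [List.mem_cons, List.not_mem_nil, or_false] at hE
      rcases hE with rfl | rfl <;>
      · refine ⟨[E], [], by simp, by simp, ?_, ?_, rfl⟩
        · rintro C' hC'
          simp only [List.mem_singleton] at hC'
          subst hC'; exact hC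
        · intro j hj; simp at hj
    · rintro X hX
      simp only [List.mem_cons, List.not_mem_nil, or_false] at hX
      rcases hX with rfl | rfl | rfl
      · exact ⟨countOcc_nil hAne, countOcc_nil hBne⟩
      · exact hgapzero
      · exact ⟨countOcc_nil hAne, countOcc_nil hBne⟩
    · rcases hC with rfl | rfl
      · rw [hc2]; simp [countOcc_self hAne]
      · rw [hc0 A hA (fun h => hAB h) (Or.inl rfl)]
        simp [countOcc_of_ne (by rw [hA, hCl]) hAB]
    · rcases hC with rfl | rfl
      · rw [hc0 B hB (fun h => hAB h.symm) (Or.inr rfl)]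
        simp [countOcc_of_ne (by rw [hB, hCl]) (fun h => hAB h.symm)]
      · rw [hc2]; simp [countOcc_self hBne]

end DPC


/-- for `A`, `B` of length `ℓ` with `Cor(A,A) = Cor(B,B)` and
every `i ≥ 0`, `L^{(A,A)}(0,i,0) = L^{(B,B)}(0,i,0)`. -/
theorem double_pattern_count (ℓ : ℕ) (A B : List Bool)
    (hA : A.length = ℓ) (hB : B.length = ℓ) (hcor : corSet A A = corSet B B) (i : ℕ) :
    patCount A B [A, A] [0, i, 0] = patCount A B [B, B] [0, i, 0] := by
  by_cases hAB : A = B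
  · subst hAB; rfl
  rcases Nat.eq_zero_or_pos ℓ with h0 | hl
  · exfalso
    apply hAB
    rw [List.length_eq_zero_iff.1 (by omega : A.length = 0),
        List.length_eq_zero_iff.1 (by omega : B.length = 0)]
  have hcount : ∀ C : List Bool, C = A ∨ C = B →
      patCount A B [C, C] [0, i, 0] = (DPC.Hset A B ℓ C C (ℓ + i)).card := by
    intro C hC
    have : {Y : List Bool | ∃ Xs, isDecomp A B Y Xs [C, C] ∧ Xs.map List.length = [0, i, 0]}
        = ↑(DPC.Hset A B ℓ C C (ℓ + i)) := by
      ext W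
      rw [Set.mem_setOf_eq, Finset.mem_coe]
      exact DPC.decomp_iff_Hset hA hB hl hAB hC W
    rw [patCount, this, Set.ncard_coe_finset]
  rw [hcount A (Or.inl rfl), hcount B (Or.inr rfl)]
  exact DPC.Hcard_eq hA hB hAB hl hcor (ℓ + i) (by omega)
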